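/- arXiv:1604.00097 — 3 statements merged into one kernel-verified Lean document; each statement's English description precedes it below -/
import Mathlib

section
/- Let $M, N \ge 1$ and let $\beta_1, \ldots, \beta_M$ and $\gamma_1, \ldots, \gamma_N$ be nonzero complex numbers, all pairwise distinct within each family, with $\beta_i + \gamma_j \ne 0$ for all $i,j$. Let $C_1,\ldots,C_M$ and $D_1,\ldots,D_N$ be complex numbers with $\sum_{i=1}^M C_i/\beta_i = 1$ and $\sum_{j=1}^N D_j/\gamma_j = 1$. Define $H_k = \frac{C_k}{\beta_k}\sum_{j=1}^N \frac{D_j}{\beta_k+\gamma_j}$ for $1 \le k \le M$ and $Q_k = D_k \sum_{i=1}^M \frac{C_i}{\beta_i(\beta_i+\gamma_k)} - \frac{D_k}{\gamma_k}$ for $1 \le k \le N$. Then for every $\theta \in \mathbb{C}$ distinct from all $\beta_i$ and all $-\gamma_j$: $\sum_{k=1}^{M}\frac{\theta H_k}{\beta_k-\theta} + 1 + \sum_{k=1}^{N}\frac{\theta Q_k}{\theta+\gamma_k} = \sum_{i=1}^{M}\sum_{j=1}^{N}\frac{C_i D_j}{(\beta_i-\theta)(\theta+\gamma_j)}$. 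-/
/-!
Because `∑ C i / β i = ∑ D j / γ j = 1`, the constant `1` is the double sum
`∑ i j, (C i / β i) (D j / γ j)`, and `Q k` can be written as a sum over `i` in the same way,
while `H k` is already a sum over `j`. Thus the left side is a double sum over `(i, j)`, and the
identity holds term by term: it is the partial-fraction decomposition of
`C i D j / ((β i - θ) (θ + γ j))` in `θ`.
-/

open Finset

theorem partial_fraction_product_term {K : Type*} [Field K] {b c t : K} (x y : K)
    (hb : b ≠ 0) (hc : c ≠ 0) (hbc : b + c ≠ 0) (hbt : b - t ≠ 0) (htc : t + c ≠ 0) :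
    t * (x / b * (y / (b + c))) / (b - t) + x / b * (y / c) +
        t * (y * (x / (b * (b + c))) - x / b * (y / c)) / (t + c) =
      x * y / ((b - t) * (t + c)) := by
  field_simp
  ring

theorem wiener_hopf_partial_fraction_general (M N : ℕ)
    (β : Fin M → ℂ) (γ : Fin N → ℂ)
    (hβ0 : ∀ i, β i ≠ 0) (hγ0 : ∀ j, γ j ≠ 0)
    (hβγ : ∀ i j, β i + γ j ≠ 0)
    (C : Fin M → ℂ) (D : Fin N → ℂ)
    (hC : ∑ i, C i / β i = 1) (hD : ∑ j, D j / γ j = 1)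
    (H : Fin M → ℂ) (hH : ∀ k, H k = C k / β k * ∑ j, D j / (β k + γ j))
    (Q : Fin N → ℂ)
    (hQ : ∀ k, Q k = D k * (∑ i, C i / (β i * (β i + γ k))) - D k / γ k)
    (θ : ℂ) (hθ1 : ∀ i, θ ≠ β i) (hθ2 : ∀ j, θ ≠ -γ j) :
    ∑ k, θ * H k / (β k - θ) + 1 + ∑ k, θ * Q k / (θ + γ k) =
      ∑ i, ∑ j, C i * D j / ((β i - θ) * (θ + γ j)) := by
  have hQ_sum : ∀ k, Q k = ∑ i, (D k * (C i / (β i * (β i + γ k))) - C i / β i * (D k / γ k)) := by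
    intro k
    rw [hQ, sum_sub_distrib, ← mul_sum, ← sum_mul, hC, one_mul]
  have h_one : (1 : ℂ) = ∑ i, ∑ j, C i / β i * (D j / γ j) := by
    rw [← sum_mul_sum, hC, hD, mul_one]
  rw [h_one]
  simp_rw [hH, hQ_sum, mul_sum, sum_div]
  rw [sum_comm (s := (univ : Finset (Fin N))), ← sum_add_distrib, ← sum_add_distrib]
  refine sum_congr rfl fun i _ => ?_
  rw [← sum_add_distrib, ← sum_add_distrib]
  refine sum_congr rfl fun j _ => ?_
  exact partial_fraction_product_term _ _ (hβ0 i) (hγ0 j) (hβγ i j)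
    (sub_ne_zero.mpr (hθ1 i).symm) fun h => hθ2 j (eq_neg_of_add_eq_zero_left h)

theorem wiener_hopf_partial_fraction (M N : ℕ) (hM : 1 ≤ M) (hN : 1 ≤ N)
    (β : Fin M → ℂ) (γ : Fin N → ℂ)
    (hβ0 : ∀ i, β i ≠ 0) (hγ0 : ∀ j, γ j ≠ 0)
    (hβ : Function.Injective β) (hγ : Function.Injective γ)
    (hβγ : ∀ i j, β i + γ j ≠ 0)
    (C : Fin M → ℂ) (D : Fin N → ℂ)
    (hC : ∑ i, C i / β i = 1) (hD : ∑ j, D j / γ j = 1)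
    (H : Fin M → ℂ) (hH : ∀ k, H k = C k / β k * ∑ j, D j / (β k + γ j))
    (Q : Fin N → ℂ)
    (hQ : ∀ k, Q k = D k * (∑ i, C i / (β i * (β i + γ k))) - D k / γ k)
    (θ : ℂ) (hθ1 : ∀ i, θ ≠ β i) (hθ2 : ∀ j, θ ≠ -γ j) :
    ∑ k, θ * H k / (β k - θ) + 1 + ∑ k, θ * Q k / (θ + γ k) =
      ∑ i, ∑ j, C i * D j / ((β i - θ) * (θ + γ j)) :=
  wiener_hopf_partial_fraction_general M N β γ hβ0 hγ0 hβγ C D hC hD H hH Q hQ θ hθ1 hθ2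
end

section
/- Under the hypotheses of the previous identity (distinct nonzero $\beta_i$, distinct nonzero $\gamma_j$ with $\beta_i + \gamma_j \ne 0$, and normalizations $\sum_i C_i/\beta_i = \sum_j D_j/\gamma_j = 1$, with $H_k$ and $Q_k$ defined as $H_k = \frac{C_k}{\beta_k}\sum_{j} \frac{D_j}{\beta_k+\gamma_j}$ and $Q_k = D_k \sum_{i} \frac{C_i}{\beta_i(\beta_i+\gamma_k)} - \frac{D_k}{\gamma_k}$), one has $\sum_{i=1}^{M} H_i - \sum_{i=1}^{N} Q_i - 1 = 0$. -/
/-!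
By partial fractions and `∑ C i / β i = 1`, `Q k = -(D k / γ k) ∑ C i / (β i + γ k)`.
Since `(1/β + 1/γ) / (β + γ) = 1 / (β γ)`, summing against `C i D j` over all pairs makes
`∑ H - ∑ Q` collapse to `(∑ C i / β i) (∑ D j / γ j) = 1`.
-/

open Finset

section PartialFractions

variable {K : Type*} [Field K] {b g : K}

theorem one_div_mul_add_eq_sub_div (hb : b ≠ 0) (hg : g ≠ 0) (hbg : b + g ≠ 0) :
    1 / (b * (b + g)) = (1 / b - 1 / (b + g)) / g := by
  field_simp
  ring

theorem div_mul_div_add_add_div_mul_div_add (hb : b ≠ 0) (hg : g ≠ 0) (hbg : b + g ≠ 0)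
    (c d : K) : c / b * (d / (b + g)) + d / g * (c / (b + g)) = c / b * (d / g) := by
  field_simp
  ring

end PartialFractions

section Sums

variable {K ι κ : Type*} [Field K] [Fintype ι] [Fintype κ]

theorem sum_div_mul_add_eq_of_sum_div_eq_one {β C : ι → K} {g : K}
    (hβ0 : ∀ i, β i ≠ 0) (hg : g ≠ 0) (hβg : ∀ i, β i + g ≠ 0) (hC : ∑ i, C i / β i = 1) :
    ∑ i, C i / (β i * (β i + g)) = (1 - ∑ i, C i / (β i + g)) / g := by
  have hterm : ∀ i, C i / (β i * (β i + g)) = (C i / β i - C i / (β i + g)) / g := fun i => by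
    rw [div_eq_mul_one_div, one_div_mul_add_eq_sub_div (hβ0 i) hg (hβg i)]
    ring
  simp only [hterm, ← sum_div, sum_sub_distrib, hC]

theorem sum_div_mul_sum_add_sum_div_mul_sum {β : ι → K} {γ : κ → K} (C : ι → K) (D : κ → K)
    (hβ0 : ∀ i, β i ≠ 0) (hγ0 : ∀ j, γ j ≠ 0) (hβγ : ∀ i j, β i + γ j ≠ 0) :
    ∑ i, C i / β i * ∑ j, D j / (β i + γ j) + ∑ j, D j / γ j * ∑ i, C i / (β i + γ j) =
      (∑ i, C i / β i) * ∑ j, D j / γ j := by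
  rw [sum_mul_sum]
  simp only [mul_sum]
  rw [sum_comm (f := fun j i => D j / γ j * (C i / (β i + γ j)))]
  simp only [← sum_add_distrib]
  exact sum_congr rfl fun i _ => sum_congr rfl fun j _ =>
    div_mul_div_add_add_div_mul_div_add (hβ0 i) (hγ0 j) (hβγ i j) (C i) (D j)

end Sums

theorem wiener_hopf_sum_identity_general (M N : ℕ)
    (β : Fin M → ℂ) (γ : Fin N → ℂ)
    (hβ0 : ∀ i, β i ≠ 0) (hγ0 : ∀ j, γ j ≠ 0)
    (hβγ : ∀ i j, β i + γ j ≠ 0)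
    (C : Fin M → ℂ) (D : Fin N → ℂ)
    (hC : ∑ i, C i / β i = 1) (hD : ∑ j, D j / γ j = 1)
    (H : Fin M → ℂ) (hH : ∀ k, H k = C k / β k * ∑ j, D j / (β k + γ j))
    (Q : Fin N → ℂ)
    (hQ : ∀ k, Q k = D k * (∑ i, C i / (β i * (β i + γ k))) - D k / γ k) :
    ∑ i, H i - ∑ i, Q i - 1 = 0 := by
  have hQ' : ∀ k, Q k = -(D k / γ k * ∑ i, C i / (β i + γ k)) := fun k => by
    rw [hQ k, sum_div_mul_add_eq_of_sum_div_eq_one hβ0 (hγ0 k) (hβγ · k) hC]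
    ring
  have hcross := sum_div_mul_sum_add_sum_div_mul_sum C D hβ0 hγ0 hβγ
  rw [hC, hD, one_mul] at hcross
  simp only [hH, hQ', sum_neg_distrib]
  linear_combination hcross

theorem wiener_hopf_sum_identity (M N : ℕ) (hM : 1 ≤ M) (hN : 1 ≤ N)
    (β : Fin M → ℂ) (γ : Fin N → ℂ)
    (hβ0 : ∀ i, β i ≠ 0) (hγ0 : ∀ j, γ j ≠ 0)
    (hβ : Function.Injective β) (hγ : Function.Injective γ)
    (hβγ : ∀ i j, β i + γ j ≠ 0)
    (C : Fin M → ℂ) (D : Fin N → ℂ)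
    (hC : ∑ i, C i / β i = 1) (hD : ∑ j, D j / γ j = 1)
    (H : Fin M → ℂ) (hH : ∀ k, H k = C k / β k * ∑ j, D j / (β k + γ j))
    (Q : Fin N → ℂ)
    (hQ : ∀ k, Q k = D k * (∑ i, C i / (β i * (β i + γ k))) - D k / γ k) :
    ∑ i, H i - ∑ i, Q i - 1 = 0 :=
  wiener_hopf_sum_identity_general M N β γ hβ0 hγ0 hβγ C D hC hD H hH Q hQ
end

section
/- Let $W^{(q)}, W^{(p+q)} : \mathbb{R} \to \mathbb{R}$ be continuous functions vanishing on $(-\infty,0)$, let $a = \Phi(q)$, $b = \Phi(p+q)$ be real constants, and define for $z \in \mathbb{R}$: $\hat{f}_2(z) = W^{(p+q)}(z) + (a-b)\int_0^z e^{a(z-t)} W^{(p+q)}(t)\, dt$ and $k(z) = W^{(q)}(-z) + (b-a) e^{-bz}\int_z^0 e^{bt} W^{(q)}(-t)\, dt$. Then for every $c \ge 0$ and every $x \in \mathbb{R}$: $\int_0^x \hat{f}_2(x+c-z) k(-z)\, dz = \int_0^x W^{(p+q)}(x+c-z) W^{(q)}(z)\, dz - (b-a) \left(\int_0^x e^{b(x-z)}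 W^{(q)}(z)\, dz\right)\left(\int_0^c e^{a(c-z)} W^{(p+q)}(z)\, dz\right)$. -/
theorem scale_function_convolution_identity (Wq Wpq : ℝ → ℝ)
    (hWq : Continuous Wq) (hWpq : Continuous Wpq)
    (hWq0 : ∀ z : ℝ, z < 0 → Wq z = 0) (hWpq0 : ∀ z : ℝ, z < 0 → Wpq z = 0)
    (a b : ℝ) (f2 k : ℝ → ℝ)
    (hf2 : ∀ z : ℝ, f2 z = Wpq z +
      (a - b) * ∫ t in (0:ℝ)..z, Real.exp (a * (z - t)) * Wpq t)
    (hk : ∀ z : ℝ, k z = Wq (-z) +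
      (b - a) * Real.exp (-b * z) * ∫ t in z..(0:ℝ), Real.exp (b * t) * Wq (-t)) :
    ∀ c : ℝ, 0 ≤ c → ∀ x : ℝ,
      ∫ z in (0:ℝ)..x, f2 (x + c - z) * k (-z) =
        (∫ z in (0:ℝ)..x, Wpq (x + c - z) * Wq z) -
          (b - a) * (∫ z in (0:ℝ)..x, Real.exp (b * (x - z)) * Wq z) *
            ∫ z in (0:ℝ)..c, Real.exp (a * (c - z)) * Wpq z := by
  -- primitives
  set g : ℝ → ℝ := fun z => Real.exp (a * z) * ∫ t in (0:ℝ)..z, Real.exp (-(a * t)) * Wpq t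
    with hgdef
  set h : ℝ → ℝ := fun z => Real.exp (b * z) * ∫ t in (0:ℝ)..z, Real.exp (-(b * t)) * Wq t
    with hhdef
  -- rewriting the convolution integrals
  have hgc : ∀ z : ℝ, (∫ t in (0:ℝ)..z, Real.exp (a * (z - t)) * Wpq t) = g z := by
    intro z
    simp only [hgdef]
    rw [← intervalIntegral.integral_const_mul]
    apply intervalIntegral.integral_congr
    intro t _
    simp only
    rw [← mul_assoc, ← Real.exp_add]
    ring_nf
  have hhc : ∀ z : ℝ, (∫ t in (0:ℝ)..z, Real.exp (b * (z - t)) * Wq t) = h z := by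
    intro z
    simp only [hhdef]
    rw [← intervalIntegral.integral_const_mul]
    apply intervalIntegral.integral_congr
    intro t _
    simp only
    rw [← mul_assoc, ← Real.exp_add]
    ring_nf
  -- derivatives of primitives
  have hg' : ∀ z : ℝ, HasDerivAt g (a * g z + Wpq z) z := by
    intro z
    have hc : Continuous fun t => Real.exp (-(a * t)) * Wpq t := by continuity
    have h1 : HasDerivAt (fun z : ℝ => Real.exp (a * z)) (a * Real.exp (a * z)) z := by
      simpa [mul_comm, Function.comp_def] using (Real.hasDerivAt_exp (a * z)).comp z
        ((hasDerivAt_id z).const_mul a)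
    have h2 : HasDerivAt (fun u => ∫ t in (0:ℝ)..u, Real.exp (-(a * t)) * Wpq t)
        (Real.exp (-(a * z)) * Wpq z) z :=
      intervalIntegral.integral_hasDerivAt_right (hc.intervalIntegrable 0 z)
        (hc.stronglyMeasurableAtFilter _ _) hc.continuousAt
    have := h1.mul h2
    refine this.congr_deriv ?_
    rw [hgdef]
    have : Real.exp (a * z) * (Real.exp (-(a * z)) * Wpq z) = Wpq z := by
      rw [← mul_assoc, ← Real.exp_add]; simp
    simp only []
    rw [mul_comm (a * Real.exp (a * z)), ← mul_assoc]
    rw [show Real.exp (a * z) * (Real.exp (-(a * z)) * Wpq z) = Wpq z from this]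
    ring
  have hh' : ∀ z : ℝ, HasDerivAt h (b * h z + Wq z) z := by
    intro z
    have hc : Continuous fun t => Real.exp (-(b * t)) * Wq t := by continuity
    have h1 : HasDerivAt (fun z : ℝ => Real.exp (b * z)) (b * Real.exp (b * z)) z := by
      simpa [mul_comm, Function.comp_def] using (Real.hasDerivAt_exp (b * z)).comp z
        ((hasDerivAt_id z).const_mul b)
    have h2 : HasDerivAt (fun u => ∫ t in (0:ℝ)..u, Real.exp (-(b * t)) * Wq t)
        (Real.exp (-(b * z)) * Wq z) z :=
      intervalIntegral.integral_hasDerivAt_right (hc.intervalIntegrable 0 z)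
        (hc.stronglyMeasurableAtFilter _ _) hc.continuousAt
    have := h1.mul h2
    refine this.congr_deriv ?_
    rw [hhdef]
    have : Real.exp (b * z) * (Real.exp (-(b * z)) * Wq z) = Wq z := by
      rw [← mul_assoc, ← Real.exp_add]; simp
    simp only []
    rw [mul_comm (b * Real.exp (b * z)), ← mul_assoc]
    rw [show Real.exp (b * z) * (Real.exp (-(b * z)) * Wq z) = Wq z from this]
    ring
  have hgcont : Continuous g := continuous_iff_continuousAt.mpr fun z => (hg' z).continuousAt
  have hhcont : Continuous h := continuous_iff_continuousAt.mpr fun z => (hh' z).continuousAt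
  -- rewrite f2 and k
  have hf2' : ∀ z : ℝ, f2 z = Wpq z + (a - b) * g z := by
    intro z; rw [hf2, hgc]
  have hk' : ∀ z : ℝ, k (-z) = Wq z + (b - a) * h z := by
    intro z
    rw [hk]
    have hsub : (∫ t in (-z)..(0:ℝ), Real.exp (b * t) * Wq (-t))
        = ∫ t in (0:ℝ)..z, Real.exp (-(b * t)) * Wq t := by
      have := intervalIntegral.integral_comp_neg (a := (0:ℝ)) (b := z)
        (f := fun t => Real.exp (b * t) * Wq (-t))
      rw [neg_zero] at this
      rw [← this]
      apply intervalIntegral.integral_congr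
      intro t _
      simp [mul_comm]
    rw [hsub, hhdef]
    simp only [neg_neg]
    ring_nf
  -- main computation
  intro c _ x
  set D : ℝ → ℝ := fun z =>
    (a * g (x + c - z) + Wpq (x + c - z)) * h z - g (x + c - z) * (b * h z + Wq z) with hDdef
  have hcomp : ∀ z : ℝ, HasDerivAt (fun z => g (x + c - z))
      (-(a * g (x + c - z) + Wpq (x + c - z))) z := by
    intro z
    have h1 : HasDerivAt (fun z : ℝ => x + c - z) (-1) z := by
      simpa using (hasDerivAt_id z).const_sub (x + c)
    have := (hg' (x + c - z)).comp z h1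
    refine this.congr_deriv ?_
    ring
  have hphi : ∀ z : ℝ, HasDerivAt (fun z => -(g (x + c - z) * h z)) (D z) z := by
    intro z
    have := ((hcomp z).mul (hh' z)).neg
    refine this.congr_deriv ?_
    rw [hDdef]
    ring
  have hDcont : Continuous D := by
    rw [hDdef]
    fun_prop
  have hFTC : (∫ z in (0:ℝ)..x, D z)
      = -(g (x + c - x) * h x) - -(g (x + c - 0) * h 0) :=
    intervalIntegral.integral_eq_sub_of_hasDerivAt (fun z _ => hphi z)
      (hDcont.intervalIntegrable 0 x)
  have hh0 : h 0 = 0 := by simp [hhdef]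
  have hint : (∫ z in (0:ℝ)..x, D z) = -(g c * h x) := by
    rw [hFTC, hh0]
    norm_num
  -- pointwise identity for the integrand
  have hpt : ∀ z : ℝ, f2 (x + c - z) * k (-z)
      = Wpq (x + c - z) * Wq z + (b - a) * D z := by
    intro z
    rw [hf2', hk', hDdef]
    ring
  have hint1 : IntervalIntegrable (fun z => Wpq (x + c - z) * Wq z) MeasureTheory.volume 0 x := by
    apply Continuous.intervalIntegrable
    fun_prop
  have hint2 : IntervalIntegrable (fun z => (b - a) * D z) MeasureTheory.volume 0 x :=
    ((continuous_const.mul hDcont).intervalIntegrable 0 x)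
  calc (∫ z in (0:ℝ)..x, f2 (x + c - z) * k (-z))
      = ∫ z in (0:ℝ)..x, (Wpq (x + c - z) * Wq z + (b - a) * D z) := by
        apply intervalIntegral.integral_congr
        intro z _
        exact hpt z
    _ = (∫ z in (0:ℝ)..x, Wpq (x + c - z) * Wq z) + ∫ z in (0:ℝ)..x, (b - a) * D z :=
        intervalIntegral.integral_add hint1 hint2
    _ = (∫ z in (0:ℝ)..x, Wpq (x + c - z) * Wq z) + (b - a) * ∫ z in (0:ℝ)..x, D z := by
        rw [intervalIntegral.integral_const_mul]
    _ = (∫ z in (0:ℝ)..x, Wpq (x + c - z) * Wq z) -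
          (b - a) * (∫ z in (0:ℝ)..x, Real.exp (b * (x - z)) * Wq z) *
            ∫ z in (0:ℝ)..c, Real.exp (a * (c - z)) * Wpq z := by
        rw [hint, hhc, hgc]
        ring
end
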